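/- arXiv:2103.08171 — 3 statements merged into one kernel-verified Lean document; each statement's English description precedes it below -/
import Mathlib

section
/- Let Z be a Fréchet space over F (F = ℝ or ℂ), (M, 𝓜, μ) a σ-finite measure space, and ψ : M → Z' (the topological dual) such that for every z ∈ Z the function x ↦ ⟨ψ(x), z⟩ is in L¹(μ). Then for every E ∈ 𝓜 the map Λ_E : Z → F defined by Λ_E(z) = ∫_E ⟨ψ(x), z⟩ dμ(x) is a continuous linear functional, i.e. Λ_E ∈ Z'. -/
/-!
The seminorm `p z = ∫ ‖⟨ψ x, z⟩‖ dμ` is lower semicontinuous by Fatou's lemma. A Fréchet space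
is a Baire space, hence barrelled, so `p` is continuous; since `‖Λ_E z‖ ≤ p z`, the linear
functional `Λ_E` is continuous.
-/

open MeasureTheory Filter Topology
open scoped ENNReal

theorem lowerSemicontinuous_lintegral {α X : Type*} [MeasurableSpace α] {μ : Measure α}
    [TopologicalSpace X] [FirstCountableTopology X] {f : α → X → ℝ≥0∞}
    (hf : ∀ a, LowerSemicontinuous (f a)) (hmeas : ∀ x, AEMeasurable (fun a => f a x) μ) :
    LowerSemicontinuous fun x => ∫⁻ a, f a x ∂μ := by
  refine lowerSemicontinuous_iff_le_liminf.2 fun x => ?_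
  calc ∫⁻ a, f a x ∂μ ≤ ∫⁻ a, liminf (f a) (𝓝 x) ∂μ := lintegral_mono fun a => (hf a).le_liminf x
    _ ≤ liminf (fun y => ∫⁻ a, f a y ∂μ) (𝓝 x) := lintegral_liminf_le' hmeas

theorem LowerSemicontinuous.ennreal_toReal {X : Type*} [TopologicalSpace X] {f : X → ℝ≥0∞}
    (hf : LowerSemicontinuous f) (hfin : ∀ x, f x ≠ ∞) :
    LowerSemicontinuous fun x => (f x).toReal := by
  intro x y hy
  rcases lt_or_ge y 0 with hy0 | hy0
  · exact Eventually.of_forall fun _ => hy0.trans_le ENNReal.toReal_nonneg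
  · filter_upwards [hf x _ ((ENNReal.ofReal_lt_iff_lt_toReal hy0 (hfin x)).2 hy)] with x' hx'
    exact (ENNReal.ofReal_lt_iff_lt_toReal hy0 (hfin x')).1 hx'

section

variable {𝕜 Z F M : Type*} [NontriviallyNormedField 𝕜] [AddCommGroup Z] [Module 𝕜 Z]
  [TopologicalSpace Z] [NormedAddCommGroup F] [NormedSpace 𝕜 F] [MeasurableSpace M]
  {μ : Measure M} (ψ : M → Z →L[𝕜] F)

noncomputable def integralNormSeminorm (hψ : ∀ z, Integrable (fun x => ψ x z) μ) :
    Seminorm 𝕜 Z :=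
  Seminorm.of (fun z => ∫ x, ‖ψ x z‖ ∂μ)
    (fun z w => calc
      ∫ x, ‖ψ x (z + w)‖ ∂μ ≤ ∫ x, (‖ψ x z‖ + ‖ψ x w‖) ∂μ :=
        integral_mono (hψ (z + w)).norm ((hψ z).norm.add (hψ w).norm) fun x => by
          simpa only [map_add] using norm_add_le (ψ x z) (ψ x w)
      _ = ∫ x, ‖ψ x z‖ ∂μ + ∫ x, ‖ψ x w‖ ∂μ := integral_add (hψ z).norm (hψ w).norm)
    (fun c z => by simp only [map_smul, norm_smul, integral_const_mul])

variable {ψ} (hψ : ∀ z, Integrable (fun x => ψ x z) μ)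

theorem lowerSemicontinuous_integralNormSeminorm [FirstCountableTopology Z] :
    LowerSemicontinuous (integralNormSeminorm ψ hψ) := by
  have hlintegral : LowerSemicontinuous fun z => ∫⁻ x, ‖ψ x z‖ₑ ∂μ :=
    lowerSemicontinuous_lintegral
      (fun x => (continuous_enorm.comp (ψ x).continuous).lowerSemicontinuous)
      fun z => (hψ z).aestronglyMeasurable.enorm
  convert hlintegral.ennreal_toReal fun z => (hψ z).hasFiniteIntegral.ne with z
  exact integral_norm_eq_lintegral_enorm (hψ z).aestronglyMeasurable

theorem continuous_integralNormSeminorm [FirstCountableTopology Z] [BarrelledSpace 𝕜 Z] :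
    Continuous (integralNormSeminorm ψ hψ) :=
  Seminorm.continuous_of_lowerSemicontinuous _ (lowerSemicontinuous_integralNormSeminorm hψ)

variable [NormedSpace ℝ F] [SMulCommClass ℝ 𝕜 F]

noncomputable def gelfandSetIntegralₗ (E : Set M) : Z →ₗ[𝕜] F where
  toFun z := ∫ x in E, ψ x z ∂μ
  map_add' z w := by
    simp only [map_add]
    exact integral_add (hψ z).integrableOn (hψ w).integrableOn
  map_smul' c z := by simp only [map_smul, integral_smul, RingHom.id_apply]

theorem norm_gelfandSetIntegralₗ_le (E : Set M) (z : Z) :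
    ‖gelfandSetIntegralₗ hψ E z‖ ≤ integralNormSeminorm ψ hψ z :=
  (norm_integral_le_integral_norm _).trans <|
    setIntegral_le_integral (hψ z).norm (Eventually.of_forall fun _ => norm_nonneg _)

theorem continuous_gelfandSetIntegralₗ [IsTopologicalAddGroup Z] [FirstCountableTopology Z]
    [BarrelledSpace 𝕜 Z] (E : Set M) : Continuous (gelfandSetIntegralₗ hψ E) :=
  (norm_withSeminorms 𝕜 F).continuous_of_continuous_comp _ fun _ =>
    Seminorm.continuous_of_le (continuous_integralNormSeminorm hψ)
      fun z => norm_gelfandSetIntegralₗ_le hψ E z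

end

theorem gelfand_integral_mem_dual_general
    (Z : Type*) [AddCommGroup Z] [Module ℝ Z] [UniformSpace Z] [IsUniformAddGroup Z]
    [ContinuousSMul ℝ Z] [TopologicalSpace.MetrizableSpace Z]
    [CompleteSpace Z]
    (M : Type*) [MeasurableSpace M] (μ : Measure M)
    (ψ : M → (Z →L[ℝ] ℝ))
    (hψ : ∀ z : Z, Integrable (fun x => ψ x z) μ)
    (E : Set M) :
    ∃ Λ : Z →L[ℝ] ℝ, ∀ z : Z, Λ z = ∫ x in E, ψ x z ∂μ := by
  -- With a countably generated uniformity, the complete space `Z` is Baire, hence barrelled.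
  have : (uniformity Z).IsCountablyGenerated := by
    rw [uniformity_eq_comap_nhds_zero Z]
    infer_instance
  exact ⟨⟨gelfandSetIntegralₗ hψ E, continuous_gelfandSetIntegralₗ hψ E⟩, fun _ => rfl⟩

/-- For a Fréchet space `Z` (complete, metrizable, locally convex
topological vector space), a σ-finite measure space `(M, μ)`, and a Gelfand
μ-integrable `ψ : M → Z'` (i.e. `x ↦ ⟨ψ x, z⟩` is in `L¹(μ)` for every `z`),
the map `Λ_E : z ↦ ∫_E ⟨ψ x, z⟩ dμ` is a continuous linear functional on `Z`,
for every measurable set `E`. -/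
theorem gelfand_integral_mem_dual
    (Z : Type*) [AddCommGroup Z] [Module ℝ Z] [UniformSpace Z] [IsUniformAddGroup Z]
    [ContinuousSMul ℝ Z] [LocallyConvexSpace ℝ Z] [TopologicalSpace.MetrizableSpace Z]
    [CompleteSpace Z]
    (M : Type*) [MeasurableSpace M] (μ : Measure M) [SigmaFinite μ]
    (ψ : M → (Z →L[ℝ] ℝ))
    (hψ : ∀ z : Z, Integrable (fun x => ψ x z) μ)
    (E : Set M) (hE : MeasurableSet E) :
    ∃ Λ : Z →L[ℝ] ℝ, ∀ z : Z, Λ z = ∫ x in E, ψ x z ∂μ :=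
  gelfand_integral_mem_dual_general Z M μ ψ hψ E
end

section
/- Vitali convergence theorem for Gelfand integrals: Let Z be a Fréchet space, (M, 𝓜, μ) a σ-finite measure space, ψ_k : M → Z' Gelfand μ-integrable for each k, and ψ : M → Z' with ⟨ψ(·), z⟩ μ-measurable for each z ∈ Z. Suppose (i) for μ-a.e. x, ψ_k(x) → ψ(x) in σ(Z', Z); (ii) for each z and ε > 0 there is E_{ε,z} of finite measure with sup_k ∫_G |⟨ψ_k, z⟩| dμ < ε for all measurable G disjoint from E_{ε,z}; (iii) for each z and ε > 0 there is δ > 0 with sup_k ∫_E |⟨ψ_k, z⟩| dμ < ε whenever μ(E) < δ. Then ψ is Gelfand μ-integrable and ∫_M ψ_k dμ → ∫_M ψ dμ in the weak-star topology σ(Z', Z). -/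
/-!
For each fixed `z`, the scalar functions `⟨ψ_k(·), z⟩` form a uniformly integrable, uniformly
tight sequence in `L¹(μ)` converging a.e. to `⟨ψ(·), z⟩`, so the statement reduces to the scalar
Vitali convergence theorem. In the form `tendsto_Lp_of_tendsto_ae` it presupposes that the limit
is in `L¹`; this is supplied by Egorov's theorem on a tight set `E`: outside `E`, and on the small
exceptional set of Egorov's theorem, Fatou's lemma bounds the limit, while on the rest of `E` it
stays uniformly close to a single `f_N`.
-/

open Filter Topology Set ENNReal

namespace MeasureTheory

variable {α β ι : Type*} {m : MeasurableSpace α} {μ : Measure α} [NormedAddCommGroup β]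
  {p : ℝ≥0∞}

theorem eLpNorm_one_indicator_eq_ofReal_setIntegral_norm {f : α → β} (hf : Integrable f μ)
    {s : Set α} (hs : MeasurableSet s) :
    eLpNorm (s.indicator f) 1 μ = ENNReal.ofReal (∫ x in s, ‖f x‖ ∂μ) := by
  rw [eLpNorm_indicator_eq_eLpNorm_restrict hs, eLpNorm_one_eq_lintegral_enorm,
    ofReal_integral_norm_eq_lintegral_enorm hf.restrict]

theorem unifIntegrable_of_setIntegral_norm_lt {f : ι → α → β} (hf : ∀ i, Integrable (f i) μ)
    (h : ∀ ε > (0 : ℝ), ∃ δ > (0 : ℝ), ∀ s, MeasurableSet s → μ s < ENNReal.ofReal δ →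
      ∀ i, ∫ x in s, ‖f i x‖ ∂μ < ε) :
    UnifIntegrable f 1 μ := by
  intro ε hε
  obtain ⟨δ, hδ, hδs⟩ := h ε hε
  refine ⟨δ / 2, half_pos hδ, fun i s hs hμs => ?_⟩
  rw [eLpNorm_one_indicator_eq_ofReal_setIntegral_norm (hf i) hs]
  refine ENNReal.ofReal_le_ofReal (hδs s hs (hμs.trans_lt ?_) i).le
  exact (ENNReal.ofReal_lt_ofReal_iff hδ).mpr (half_lt_self hδ)

theorem unifTight_of_setIntegral_norm_lt {f : ι → α → β} (hf : ∀ i, Integrable (f i) μ)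
    (h : ∀ ε > (0 : ℝ), ∃ E, MeasurableSet E ∧ μ E < ⊤ ∧
      ∀ G, MeasurableSet G → G ∩ E = ∅ → ∀ i, ∫ x in G, ‖f i x‖ ∂μ < ε) :
    UnifTight f 1 μ := by
  intro ε hε
  obtain ⟨E, hE, hμE, hEc⟩ := h ε (NNReal.coe_pos.mpr hε)
  refine ⟨E, hμE.ne, fun i => ?_⟩
  rw [eLpNorm_one_indicator_eq_ofReal_setIntegral_norm (hf i) hE.compl,
    ← ENNReal.ofReal_coe_nnreal]
  exact ENNReal.ofReal_le_ofReal (hEc Eᶜ hE.compl (compl_inter_self E) i).le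

theorem memLp_indicator_of_tendsto_ae {f : ℕ → α → β} {g : α → β} {s : Set α}
    (hs : MeasurableSet s) (hf : ∀ n, AEStronglyMeasurable (f n) μ) {C : ℝ≥0∞} (hC : C ≠ ∞)
    (hbound : ∀ n, eLpNorm (s.indicator (f n)) p μ ≤ C)
    (hfg : ∀ᵐ x ∂μ, Tendsto (fun n => f n x) atTop (𝓝 (g x))) :
    MemLp (s.indicator g) p μ := by
  have hg := aestronglyMeasurable_of_tendsto_ae atTop hf hfg
  refine ⟨hg.indicator hs, (Lp.eLpNorm_le_of_ae_tendsto (Eventually.of_forall (f := atTop) hbound)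
    (fun n => (hf n).indicator hs) ?_).trans_lt hC.lt_top⟩
  filter_upwards [hfg] with x hx
  by_cases hxs : x ∈ s <;> simp [hxs, hx]

theorem memLp_indicator_of_dist_le {f g : α → β} {s : Set α} (hs : MeasurableSet s)
    (hμs : μ s ≠ ∞) (hf : MemLp f p μ) (hg : AEStronglyMeasurable g μ) {C : ℝ}
    (hfg : ∀ x ∈ s, dist (g x) (f x) ≤ C) :
    MemLp (s.indicator g) p μ := by
  have hdiff : MemLp (s.indicator (g - f)) p μ := by
    rw [memLp_indicator_iff_restrict hs]
    have := isFiniteMeasure_restrict.mpr hμs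
    exact MemLp.of_bound (hg.sub hf.1).restrict C
      (ae_restrict_of_forall_mem hs fun x hx => by simpa [dist_eq_norm] using hfg x hx)
  have hsplit : s.indicator g = s.indicator (g - f) + s.indicator f := by
    rw [← indicator_add', sub_add_cancel]
  exact hsplit ▸ hdiff.add (hf.indicator hs)

theorem memLp_of_tendsto_ae_of_unifIntegrable_of_unifTight_of_meas {f : ℕ → α → β}
    {g : α → β} (hf : ∀ n, StronglyMeasurable (f n)) (hg : StronglyMeasurable g)
    (hfp : ∀ n, MemLp (f n) p μ) (hui : UnifIntegrable f p μ) (hut : UnifTight f p μ)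
    (hfg : ∀ᵐ x ∂μ, Tendsto (fun n => f n x) atTop (𝓝 (g x))) :
    MemLp g p μ := by
  obtain ⟨E, hE, hμE, hEc⟩ := hut.exists_measurableSet_indicator one_ne_zero
  obtain ⟨δ, hδ, hδs⟩ := hui one_pos
  obtain ⟨t, htE, ht, hμt, hunif⟩ :=
    tendstoUniformlyOn_of_ae_tendsto hf hg hE hμE.ne (hfg.mono fun x hx _ => hx) hδ
  obtain ⟨N, hN⟩ := (Metric.tendstoUniformlyOn_iff.mp hunif 1 one_pos).exists
  have hfm n := (hf n).aestronglyMeasurable (μ := μ)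
  have hgEc : MemLp (Eᶜ.indicator g) p μ :=
    memLp_indicator_of_tendsto_ae hE.compl hfm one_ne_top hEc hfg
  have hgt : MemLp (t.indicator g) p μ :=
    memLp_indicator_of_tendsto_ae ht hfm ofReal_ne_top (fun n => hδs n t ht hμt) hfg
  have hgEt : MemLp ((E \ t).indicator g) p μ :=
    memLp_indicator_of_dist_le (hE.diff ht) (measure_ne_top_of_subset sdiff_subset hμE.ne)
      (hfp N) hg.aestronglyMeasurable fun x hx => (hN x hx).le
  have hsplit : E.indicator g = t.indicator g + (E \ t).indicator g := by
    rw [Pi.add_def, ← indicator_union_of_disjoint disjoint_sdiff_right, union_sdiff_cancel htE]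
  rw [← E.indicator_compl_add_self g, hsplit]
  exact hgEc.add (hgt.add hgEt)

theorem memLp_of_tendsto_ae_of_unifIntegrable_of_unifTight {f : ℕ → α → β} {g : α → β}
    (hf : ∀ n, MemLp (f n) p μ) (hui : UnifIntegrable f p μ) (hut : UnifTight f p μ)
    (hfg : ∀ᵐ x ∂μ, Tendsto (fun n => f n x) atTop (𝓝 (g x))) :
    MemLp g p μ := by
  have hg := aestronglyMeasurable_of_tendsto_ae atTop (fun n => (hf n).1) hfg
  have hff' n := (hf n).1.ae_eq_mk
  refine (memLp_of_tendsto_ae_of_unifIntegrable_of_unifTight_of_meas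
    (fun n => (hf n).1.stronglyMeasurable_mk) hg.stronglyMeasurable_mk
    (fun n => (hf n).ae_eq (hff' n)) (hui.ae_eq hff') (hut.aeeq hff') ?_).ae_eq hg.ae_eq_mk.symm
  filter_upwards [hfg, ae_all_iff.mpr hff', hg.ae_eq_mk] with x hx hfx hgx
  rw [← hgx]
  exact hx.congr hfx

theorem tendsto_integral_of_tendsto_ae_of_unifIntegrable_of_unifTight [NormedSpace ℝ β]
    {f : ℕ → α → β} {g : α → β} (hf : ∀ n, Integrable (f n) μ) (hui : UnifIntegrable f 1 μ)
    (hut : UnifTight f 1 μ) (hfg : ∀ᵐ x ∂μ, Tendsto (fun n => f n x) atTop (𝓝 (g x))) :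
    Tendsto (fun n => ∫ x, f n x ∂μ) atTop (𝓝 (∫ x, g x ∂μ)) := by
  have hg : MemLp g 1 μ :=
    memLp_of_tendsto_ae_of_unifIntegrable_of_unifTight (fun n => memLp_one_iff_integrable.mpr (hf n)) hui hut hfg
  refine tendsto_integral_of_L1 g hg.1 (Eventually.of_forall hf) ?_
  simpa only [eLpNorm_one_eq_lintegral_enorm, Pi.sub_apply] using
    tendsto_Lp_of_tendsto_ae le_rfl one_ne_top (fun n => (hf n).1) hg hui hut hfg

end MeasureTheory

open MeasureTheory Filter Topology

theorem gelfand_integral_vitali_general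
    (Z : Type*) [AddCommGroup Z] [Module ℝ Z] [UniformSpace Z]
    (M : Type*) [MeasurableSpace M] (μ : Measure M)
    (ψk : ℕ → M → (Z →L[ℝ] ℝ)) (ψ : M → (Z →L[ℝ] ℝ))
    (hψk : ∀ k, ∀ z : Z, Integrable (fun x => ψk k x z) μ)
    (hconv : ∀ᵐ x ∂μ, ∀ z : Z, Tendsto (fun k => ψk k x z) atTop (𝓝 (ψ x z)))
    (htight : ∀ z : Z, ∀ ε > (0 : ℝ), ∃ E : Set M, MeasurableSet E ∧ μ E < ⊤ ∧
      ∀ G : Set M, MeasurableSet G → G ∩ E = ∅ →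
        ∀ k, ∫ x in G, |ψk k x z| ∂μ < ε)
    (hunifAC : ∀ z : Z, ∀ ε > (0 : ℝ), ∃ δ > (0 : ℝ),
      ∀ E : Set M, MeasurableSet E → μ E < ENNReal.ofReal δ →
        ∀ k, ∫ x in E, |ψk k x z| ∂μ < ε) :
    (∀ z : Z, Integrable (fun x => ψ x z) μ) ∧
    (∀ z : Z, Tendsto (fun k => ∫ x, ψk k x z ∂μ) atTop (𝓝 (∫ x, ψ x z ∂μ))) := by
  simp only [← Real.norm_eq_abs] at htight hunifAC
  have hui z : UnifIntegrable (fun k x => ψk k x z) 1 μ :=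
    unifIntegrable_of_setIntegral_norm_lt (hψk · z) (hunifAC z)
  have hut z : UnifTight (fun k x => ψk k x z) 1 μ :=
    unifTight_of_setIntegral_norm_lt (hψk · z) (htight z)
  have hlim z : ∀ᵐ x ∂μ, Tendsto (fun k => ψk k x z) atTop (𝓝 (ψ x z)) :=
    hconv.mono fun x hx => hx z
  refine ⟨fun z => memLp_one_iff_integrable.mp ?_, fun z => ?_⟩
  · exact memLp_of_tendsto_ae_of_unifIntegrable_of_unifTight (fun k => memLp_one_iff_integrable.mpr (hψk k z))
      (hui z) (hut z) (hlim z)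
  · exact tendsto_integral_of_tendsto_ae_of_unifIntegrable_of_unifTight (hψk · z) (hui z)
      (hut z) (hlim z)

/-- Vitali convergence theorem for Gelfand integrals. Under
(i) a.e. weak-star convergence `ψ_k(x) → ψ(x)`, (ii) uniform tightness and
(iii) uniform absolute continuity of the integrals of `|⟨ψ_k, z⟩|`, the limit
`ψ` is Gelfand μ-integrable and `∫_M ψ_k dμ → ∫_M ψ dμ` weak-star. -/
theorem gelfand_integral_vitali
    (Z : Type*) [AddCommGroup Z] [Module ℝ Z] [UniformSpace Z] [IsUniformAddGroup Z]
    [ContinuousSMul ℝ Z] [LocallyConvexSpace ℝ Z] [TopologicalSpace.MetrizableSpace Z]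
    [CompleteSpace Z]
    (M : Type*) [MeasurableSpace M] (μ : Measure M) [SigmaFinite μ]
    (ψk : ℕ → M → (Z →L[ℝ] ℝ)) (ψ : M → (Z →L[ℝ] ℝ))
    (hψk : ∀ k, ∀ z : Z, Integrable (fun x => ψk k x z) μ)
    (hmeas : ∀ z : Z, AEMeasurable (fun x => ψ x z) μ)
    (hconv : ∀ᵐ x ∂μ, ∀ z : Z, Tendsto (fun k => ψk k x z) atTop (𝓝 (ψ x z)))
    (htight : ∀ z : Z, ∀ ε > (0 : ℝ), ∃ E : Set M, MeasurableSet E ∧ μ E < ⊤ ∧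
      ∀ G : Set M, MeasurableSet G → G ∩ E = ∅ →
        ∀ k, ∫ x in G, |ψk k x z| ∂μ < ε)
    (hunifAC : ∀ z : Z, ∀ ε > (0 : ℝ), ∃ δ > (0 : ℝ),
      ∀ E : Set M, MeasurableSet E → μ E < ENNReal.ofReal δ →
        ∀ k, ∫ x in E, |ψk k x z| ∂μ < ε) :
    (∀ z : Z, Integrable (fun x => ψ x z) μ) ∧
    (∀ z : Z, Tendsto (fun k => ∫ x, ψk k x z ∂μ) atTop (𝓝 (∫ x, ψ x z ∂μ))) :=
  gelfand_integral_vitali_general Z M μ ψk ψ hψk hconv htight hunifAC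
end

section
/- Dominated convergence theorem for Gelfand integrals: Let Z be a Fréchet space, (M, 𝓜, μ) σ-finite, and ψ_k, ψ : M → Z' such that ⟨ψ_k(·), z⟩ and ⟨ψ(·), z⟩ are μ-measurable for each z ∈ Z, ψ_k(x) → ψ(x) weakly-star for μ-a.e. x, and for each z ∈ Z there exists 0 ≤ g^z ∈ L¹(μ) with |⟨ψ_k(x), z⟩| ≤ g^z(x) for μ-a.e. x and all k. Then ψ is Gelfand μ-integrable and ∫_M ψ_k dμ → ∫_M ψ dμ in σ(Z', Z). -/
open MeasureTheory Filter Topology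

/-! Gelfand integrability and weak-star convergence of Gelfand integrals are both tested against
one `z : Z` at a time, so for each `z` the statement is the scalar dominated convergence theorem
for the pairings `⟨ψ_k(·), z⟩`. -/

namespace MeasureTheory

theorem integrable_of_dominated_convergence {α G : Type*} [NormedAddCommGroup G]
    {m : MeasurableSpace α} {μ : Measure α} {F : ℕ → α → G} {f : α → G} (bound : α → ℝ)
    (F_measurable : ∀ n, AEStronglyMeasurable (F n) μ) (bound_integrable : Integrable bound μ)
    (h_bound : ∀ n, ∀ᵐ a ∂μ, ‖F n a‖ ≤ bound a)
    (h_lim : ∀ᵐ a ∂μ, Tendsto (fun n => F n a) atTop (𝓝 (f a))) :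
    Integrable f μ :=
  ⟨aestronglyMeasurable_of_tendsto_ae atTop F_measurable h_lim,
    hasFiniteIntegral_of_dominated_convergence bound_integrable.hasFiniteIntegral h_bound h_lim⟩

end MeasureTheory

theorem gelfand_integral_dominated_convergence_general
    (Z : Type*) [AddCommGroup Z] [Module ℝ Z] [UniformSpace Z]
    (M : Type*) [MeasurableSpace M] (μ : Measure M)
    (ψk : ℕ → M → (Z →L[ℝ] ℝ)) (ψ : M → (Z →L[ℝ] ℝ))
    (hmeask : ∀ k, ∀ z : Z, AEMeasurable (fun x => ψk k x z) μ)
    (hconv : ∀ᵐ x ∂μ, ∀ z : Z, Tendsto (fun k => ψk k x z) atTop (𝓝 (ψ x z)))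
    (hdom : ∀ z : Z, ∃ g : M → ℝ, (∀ x, 0 ≤ g x) ∧ Integrable g μ ∧
      ∀ k, ∀ᵐ x ∂μ, |ψk k x z| ≤ g x) :
    (∀ z : Z, Integrable (fun x => ψ x z) μ) ∧
    (∀ z : Z, Tendsto (fun k => ∫ x, ψk k x z ∂μ) atTop (𝓝 (∫ x, ψ x z ∂μ))) := by
  refine ⟨fun z => ?_, fun z => ?_⟩ <;> obtain ⟨g, -, hg, hbound⟩ := hdom z
  · exact integrable_of_dominated_convergence g (fun k => (hmeask k z).aestronglyMeasurable) hg
      hbound (hconv.mono fun x hx => hx z)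
  · exact tendsto_integral_of_dominated_convergence g (fun k => (hmeask k z).aestronglyMeasurable)
      hg hbound (hconv.mono fun x hx => hx z)

/-- Dominated convergence theorem for Gelfand integrals: if the
pairings are measurable, `ψ_k(x) → ψ(x)` weak-star for a.e. `x`, and for each
`z` there is `0 ≤ g^z ∈ L¹(μ)` dominating `|⟨ψ_k(x), z⟩|` a.e. for all `k`,
then `ψ` is Gelfand μ-integrable and `∫ ψ_k dμ → ∫ ψ dμ` weak-star. -/
theorem gelfand_integral_dominated_convergence
    (Z : Type*) [AddCommGroup Z] [Module ℝ Z] [UniformSpace Z] [IsUniformAddGroup Z]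
    [ContinuousSMul ℝ Z] [LocallyConvexSpace ℝ Z] [TopologicalSpace.MetrizableSpace Z]
    [CompleteSpace Z]
    (M : Type*) [MeasurableSpace M] (μ : Measure M) [SigmaFinite μ]
    (ψk : ℕ → M → (Z →L[ℝ] ℝ)) (ψ : M → (Z →L[ℝ] ℝ))
    (hmeask : ∀ k, ∀ z : Z, AEMeasurable (fun x => ψk k x z) μ)
    (hmeas : ∀ z : Z, AEMeasurable (fun x => ψ x z) μ)
    (hconv : ∀ᵐ x ∂μ, ∀ z : Z, Tendsto (fun k => ψk k x z) atTop (𝓝 (ψ x z)))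
    (hdom : ∀ z : Z, ∃ g : M → ℝ, (∀ x, 0 ≤ g x) ∧ Integrable g μ ∧
      ∀ k, ∀ᵐ x ∂μ, |ψk k x z| ≤ g x) :
    (∀ z : Z, Integrable (fun x => ψ x z) μ) ∧
    (∀ z : Z, Tendsto (fun k => ∫ x, ψk k x z ∂μ) atTop (𝓝 (∫ x, ψ x z ∂μ))) :=
  gelfand_integral_dominated_convergence_general Z M μ ψk ψ hmeask hconv hdom
end
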